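/- arXiv:1005.4321 — 7 statements merged into one kernel-verified Lean document; each statement's English description precedes it below -/
import Mathlib

section
/- Let A be a primitive K-algebra (i.e., A admits a faithful simple right A-module). If the K-vector space dimension of A is strictly less than the cardinality of K, then every element of the endomorphism ring End_A(V) of a faithful simple right A-module V that commutes with the A-action and is central is algebraic over K; in particular, the center of End_A(V) is an algebraic field extension of K. -/
/-!
Evaluation at a nonzero vector embeds `End_A(V)` `K`-linearly into `V`, and `V` is a quotient
of `A`, so `dim_K End_A(V) < #K`. The center of the division ring `End_A(V)` is a field, and a
transcendental central `φ` would make the `#K` elements `(φ - a)⁻¹`, `a ∈ K`, linearly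
independent.
-/

universe u v w

open Cardinal Module

theorem Cardinal.lift_lt_of_lift_le_of_lift_lt {a : Cardinal.{u}} {b : Cardinal.{v}}
    {c : Cardinal.{w}} (hab : lift.{v} a ≤ lift.{u} b) (hbc : lift.{w} b < lift.{v} c) :
    lift.{w} a < lift.{u} c := by
  rw [← lift_lt.{max u w, v}, lift_lift, lift_lift]
  calc lift.{max v w} a ≤ lift.{max u w} b := by simpa using lift_le.{w, max u v}.2 hab
    _ < lift.{max u v} c := by simpa using lift_lt.{max v w, u}.2 hbc

section DivisionRing

variable {F : Type u} {E : Type w} [Field F] [DivisionRing E] [Algebra F E]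

instance Subalgebra.center.instField : Field (Subalgebra.center F E) :=
  inferInstanceAs (Field (Subring.center E))

theorem IsAlgebraic.of_mem_center_of_lift_rank_lt {x : E} (hx : x ∈ Subalgebra.center F E)
    (hrank : lift.{u} (Module.rank F E) < lift.{w} #F) : IsAlgebraic F x := by
  let ι := (Subalgebra.center F E).val
  have hι : Function.Injective ι := Subtype.val_injective
  rw [show x = ι ⟨x, hx⟩ from rfl, isAlgebraic_algHom_iff ι hι]
  by_contra htr
  have hindep := (Transcendental.linearIndependent_sub_inv htr).cardinal_lift_le_rank
  have hcenter := lift_le.{u}.2 (ι.toLinearMap.rank_le_of_injective hι)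
  exact hrank.not_ge (hindep.trans hcenter)

end DivisionRing

namespace IsSimpleModule

variable (S : Type*) {R : Type v} {M : Type w} [Ring R] [AddCommGroup M] [Module R M]
  [IsSimpleModule R M]

theorem rank_end_le_rank [Semiring S] [Module S M] [SMulCommClass R S M] :
    Module.rank S (Module.End R M) ≤ Module.rank S M := by
  have := IsSimpleModule.nontrivial R M
  obtain ⟨m, hm⟩ := exists_ne (0 : M)
  refine (LinearMap.applyₗ' S m).rank_le_of_injective fun d e hde => ?_
  rw [← sub_eq_zero]
  refine (d - e).injective_or_eq_zero.resolve_left fun hinj => hm (hinj ?_)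
  simpa [sub_eq_zero] using hde

theorem lift_rank_le_lift_rank_ring [CommSemiring S] [Algebra S R] [Module S M]
    [IsScalarTower S R M] : lift.{v} (Module.rank S M) ≤ lift.{w} (Module.rank S R) := by
  have := IsSimpleModule.nontrivial R M
  obtain ⟨m, hm⟩ := exists_ne (0 : M)
  exact ((LinearMap.toSpanSingleton R M m).restrictScalars S).lift_rank_le_of_surjective
    (toSpanSingleton_surjective R hm)

end IsSimpleModule

theorem center_of_endomorphism_ring_algebraic_general (K : Type u) (A : Type v) [Field K] [Ring A]
    [Algebra K A] (V : Type w) [AddCommGroup V] [Module K V] [Module Aᵐᵒᵖ V]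
    [IsScalarTower K Aᵐᵒᵖ V] [SMulCommClass Aᵐᵒᵖ K V]
    (hsimple : IsSimpleModule Aᵐᵒᵖ V)
    (hdim : Cardinal.lift.{u} (Module.rank K A) < Cardinal.lift.{v} (Cardinal.mk K)) :
    ∀ φ : Module.End Aᵐᵒᵖ V, φ ∈ Subalgebra.center K (Module.End Aᵐᵒᵖ V) →
      IsAlgebraic K φ := by
  classical
  intro φ hφ
  have hV : lift.{v} (Module.rank K V) ≤ lift.{w} (Module.rank K A) := by
    simpa only [MulOpposite.rank] using
      IsSimpleModule.lift_rank_le_lift_rank_ring K (R := Aᵐᵒᵖ) (M := V)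
  have hEnd : lift.{v} (Module.rank K (Module.End Aᵐᵒᵖ V)) ≤ lift.{w} (Module.rank K A) :=
    (lift_le.2 (IsSimpleModule.rank_end_le_rank K)).trans hV
  exact IsAlgebraic.of_mem_center_of_lift_rank_lt hφ (lift_lt_of_lift_le_of_lift_lt hEnd hdim)

/-- Let `A` be a primitive `K`-algebra (it admits a faithful simple right module `V`).
If `dim_K A < #K`, then every element of `End_A(V)` (for a faithful simple right
`A`-module `V`) lying in the center is algebraic over `K`; in particular the center of
`End_A(V)` is an algebraic field extension of `K`. Right `A`-modules are modules over
the opposite ring `Aᵐᵒᵖ`. -/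
theorem center_of_endomorphism_ring_algebraic (K : Type u) (A : Type v) [Field K] [Ring A]
    [Algebra K A] (V : Type w) [AddCommGroup V] [Module K V] [Module Aᵐᵒᵖ V]
    [IsScalarTower K Aᵐᵒᵖ V] [SMulCommClass Aᵐᵒᵖ K V]
    (hsimple : IsSimpleModule Aᵐᵒᵖ V) (hfaithful : FaithfulSMul Aᵐᵒᵖ V)
    (hdim : Cardinal.lift.{u} (Module.rank K A) < Cardinal.lift.{v} (Cardinal.mk K)) :
    ∀ φ : Module.End Aᵐᵒᵖ V, φ ∈ Subalgebra.center K (Module.End Aᵐᵒᵖ V) →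
      IsAlgebraic K φ :=
  center_of_endomorphism_ring_algebraic_general K A V hsimple hdim
end

section
/- Let A be a K-algebra and V a simple right A-module. If dim_K End_A(V) < #K, then the division ring End_A(V) is algebraic over K. -/
/-!
A transcendental element `x` of a division `K`-algebra `E` sends every nonzero polynomial to a
unit, so `K(X) → E`, `X ↦ x`, is a well-defined embedding even when `E` is not commutative.
The partial fractions `(X - a)⁻¹`, `a ∈ K`, are linearly independent in `K(X)`, hence so are the
`(x - a)⁻¹` in `E`, and `dim_K E ≥ #K`. Schur's lemma makes `End_A(V)` such an algebra.
-/

open Polynomial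

universe u v w

section DivisionRing

variable {K : Type u} {E : Type v} [Field K] [DivisionRing E] [Algebra K E] {x : E}

noncomputable def Transcendental.aevalUnits (hx : Transcendental K x) :
    nonZeroDivisors K[X] →* Eˣ where
  toFun p := Units.mk0 (Polynomial.aeval x p.1) fun h ↦
    nonZeroDivisors.ne_zero p.2 (transcendental_iff.1 hx _ h)
  map_one' := by ext; simp
  map_mul' p q := by ext; simp

noncomputable def Transcendental.liftFractionRing (hx : Transcendental K x) :
    FractionRing K[X] →ₐ[K] E where
  __ := OreLocalization.universalHom (Polynomial.aeval x).toRingHom hx.aevalUnits fun _ ↦ rfl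
  commutes' c := (OreLocalization.universalHom_commutes (r := C c) ..).trans (aeval_C x c)

theorem Transcendental.liftFractionRing_algebraMap (hx : Transcendental K x) (p : K[X]) :
    hx.liftFractionRing (algebraMap K[X] (FractionRing K[X]) p) = Polynomial.aeval x p :=
  OreLocalization.universalHom_commutes ..

theorem Transcendental.linearIndependent_sub_inv' (hx : Transcendental K x) :
    LinearIndependent K fun a ↦ (x - algebraMap K E a)⁻¹ := by
  set X' := algebraMap K[X] (FractionRing K[X]) X
  have hX' : Transcendental K X' :=
    (transcendental_algebraMap_iff (IsFractionRing.injective _ _)).2 (transcendental_X K)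
  have hcomp : (fun a ↦ (x - algebraMap K E a)⁻¹) =
      hx.liftFractionRing ∘ fun a ↦ (X' - algebraMap K _ a)⁻¹ := by
    ext a
    simp [map_inv₀, X', hx.liftFractionRing_algebraMap]
  rw [hcomp]
  exact hX'.linearIndependent_sub_inv.map' hx.liftFractionRing.toLinearMap
    (LinearMap.ker_eq_bot.2 hx.liftFractionRing.toRingHom.injective)

theorem Transcendental.lift_cardinalMk_le_rank (hx : Transcendental K x) :
    Cardinal.lift.{v} (Cardinal.mk K) ≤ Cardinal.lift.{u} (Module.rank K E) :=
  hx.linearIndependent_sub_inv'.cardinal_lift_le_rank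

end DivisionRing

theorem endomorphism_ring_algebraic_of_rank_lt_general (K : Type u) (A : Type v) [Field K] [Ring A]
    [Algebra K A] (V : Type w) [AddCommGroup V] [Module K V] [Module Aᵐᵒᵖ V]
    [IsScalarTower K Aᵐᵒᵖ V]
    (hsimple : IsSimpleModule Aᵐᵒᵖ V)
    (hdim : Cardinal.lift.{u} (Module.rank K (Module.End Aᵐᵒᵖ V)) <
      Cardinal.lift.{w} (Cardinal.mk K)) :
    ∀ φ : Module.End Aᵐᵒᵖ V, IsAlgebraic K φ := by
  classical
  intro φ
  by_contra hφ
  exact hdim.not_ge (Transcendental.lift_cardinalMk_le_rank hφ)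

/-- Let `A` be a `K`-algebra and `V` a simple right `A`-module.  If
`dim_K End_A(V) < #K`, then the division ring `End_A(V)` is algebraic over `K`:
every endomorphism satisfies a nonzero polynomial over `K`.  Right `A`-modules are
modules over the opposite ring `Aᵐᵒᵖ`. -/
theorem endomorphism_ring_algebraic_of_rank_lt (K : Type u) (A : Type v) [Field K] [Ring A]
    [Algebra K A] (V : Type w) [AddCommGroup V] [Module K V] [Module Aᵐᵒᵖ V]
    [IsScalarTower K Aᵐᵒᵖ V] [SMulCommClass Aᵐᵒᵖ K V]
    (hsimple : IsSimpleModule Aᵐᵒᵖ V)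
    (hdim : Cardinal.lift.{u} (Module.rank K (Module.End Aᵐᵒᵖ V)) <
      Cardinal.lift.{w} (Cardinal.mk K)) :
    ∀ φ : Module.End Aᵐᵒᵖ V, IsAlgebraic K φ :=
  endomorphism_ring_algebraic_of_rank_lt_general K A V hsimple hdim
end

section
/- Let A be a ring and P a prime ideal of A. If every prime ideal strictly containing P contains one of finitely many ideals Q₁,…,Qₙ each strictly containing P, then P is locally closed in Spec(A): the intersection of all primes strictly containing P strictly contains P. -/
/-- A two-sided ideal `P` of a ring `A` is prime if `P ≠ A` and whenever `IJ ⊆ P` for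
two-sided ideals `I, J` then `I ⊆ P` or `J ⊆ P`. -/
def TwoSidedIdeal.IsPrimeIdeal {A : Type*} [Ring A] (P : TwoSidedIdeal A) : Prop :=
  P ≠ ⊤ ∧ ∀ I J : TwoSidedIdeal A, (∀ x ∈ I, ∀ y ∈ J, x * y ∈ P) → I ≤ P ∨ J ≤ P

/-- Membership in an indexed infimum of two-sided ideals. -/
lemma TwoSidedIdeal.memInfAux {R : Type*} [NonUnitalNonAssocRing R] {ι : Type*}
    {I : ι → TwoSidedIdeal R} {x : R} : x ∈ iInf I ↔ ∀ i, x ∈ I i := by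
  rw [iInf, TwoSidedIdeal.mem_sInf]
  exact ⟨fun h i => h _ ⟨i, rfl⟩, fun h J ⟨i, hi⟩ => hi ▸ h i⟩

/-- The finite intersection of ideals each not below a prime `P` is not below `P`. -/
lemma iInf_not_le_of_prime {A : Type*} [Ring A] (P : TwoSidedIdeal A)
    (hP : P.IsPrimeIdeal) : ∀ (n : ℕ) (Q : Fin n → TwoSidedIdeal A),
    (∀ i, ¬ Q i ≤ P) → ¬ (⨅ i, Q i) ≤ P := by
  intro n
  induction n with
  | zero =>
    intro Q _ hle
    apply hP.1
    rw [eq_top_iff]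
    intro x _
    exact hle (TwoSidedIdeal.memInfAux.mpr (fun i => i.elim0))
  | succ n ih =>
    intro Q hQ hle
    have key : ∀ x ∈ Q 0, ∀ y ∈ (⨅ i : Fin n, Q i.succ), x * y ∈ P := by
      intro x hx y hy
      apply hle
      rw [TwoSidedIdeal.memInfAux]
      intro i
      refine Fin.cases ?_ ?_ i
      · exact (Q 0).mul_mem_right _ _ hx
      · intro j
        exact (Q j.succ).mul_mem_left _ _ (TwoSidedIdeal.memInfAux.mp hy j)
    rcases hP.2 _ _ key with h | h
    · exact hQ 0 h
    · exact ih (fun i => Q i.succ) (fun i => hQ i.succ) h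

/-- Let `P` be a prime ideal of `A` such that the set of minimal primes over `P` that
properly contain `P` is finite.  If every prime strictly containing `P` contains one of
finitely many ideals `Q₁, …, Qₙ`, each strictly containing `P`, then `P` is locally closed
in `Spec A`: the intersection of all primes strictly containing `P` strictly contains `P`. -/
theorem locally_closed_of_finitely_many_covering_ideals (A : Type*) [Ring A]
    (P : TwoSidedIdeal A) (hP : P.IsPrimeIdeal)
    (hfin : {Q : TwoSidedIdeal A | (Q.IsPrimeIdeal ∧ P ≤ Q ∧
      ∀ R : TwoSidedIdeal A, R.IsPrimeIdeal → P ≤ R → R ≤ Q → R = Q) ∧ P < Q}.Finite)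
    (n : ℕ) (Q : Fin n → TwoSidedIdeal A) (hQ : ∀ i, P < Q i)
    (hcover : ∀ R : TwoSidedIdeal A, R.IsPrimeIdeal → P < R → ∃ i, Q i ≤ R) :
    P < sInf {R : TwoSidedIdeal A | R.IsPrimeIdeal ∧ P < R} := by
  have hnle := iInf_not_le_of_prime P hP n Q (fun i => (hQ i).not_ge)
  rw [SetLike.not_le_iff_exists] at hnle
  obtain ⟨a, ha, haP⟩ := hnle
  have hle : P ≤ sInf {R : TwoSidedIdeal A | R.IsPrimeIdeal ∧ P < R} :=
    le_sInf fun R hR => hR.2.le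
  refine lt_of_le_of_ne hle fun h => haP ?_
  rw [h, TwoSidedIdeal.mem_sInf]
  intro R hR
  obtain ⟨i, hi⟩ := hcover R hR.1 hR.2
  exact hi (TwoSidedIdeal.memInfAux.mp ha i)
end

section
/- In a maximal tail M of a directed graph, any two cycles contained in M that have no exit in M are cyclic permutations of each other; equivalently, there is at most one cycle without exit in M up to cyclic permutation. -/
section Graph

variable {V E : Type*} (s r : E → V)

/-- `v ≥ w`: either `v = w` or there is a directed path from `v` to `w`. -/
def Reach (v w : V) : Prop :=
  Relation.ReflTransGen (fun a b => ∃ e, s e = a ∧ r e = b) v w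

/-- A nonempty `M ⊆ V` is a maximal tail: (1) it is upward closed under `≥`;
(2) every non-sink vertex of `M` emits an edge into `M`; (3) `M` is downward directed. -/
def MaximalTail (M : Set V) : Prop :=
  M.Nonempty ∧
  (∀ v w, Reach s r v w → w ∈ M → v ∈ M) ∧
  (∀ v ∈ M, (∃ e, s e = v) → ∃ e, s e = v ∧ r e ∈ M) ∧
  (∀ v ∈ M, ∀ w ∈ M, ∃ y ∈ M, Reach s r v y ∧ Reach s r w y)

/-- `c` is a cycle: a nonempty list of consecutive edges returning to its starting
vertex, with pairwise distinct sources. -/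
def IsCycle (c : List E) : Prop :=
  c ≠ [] ∧ c.Chain' (fun a b => r a = s b) ∧
  (∀ h : c ≠ [], r (c.getLast h) = s (c.head h)) ∧ (c.map s).Nodup

/-- The cycle `c` is contained in `M`: all its vertices lie in `M`. -/
def CycleIn (c : List E) (M : Set V) : Prop :=
  ∀ e ∈ c, s e ∈ M ∧ r e ∈ M

/-- The cycle `c` has no exit in `M`: no vertex of `c` emits an edge, other than the
corresponding cycle edge, whose range lies in `M`. -/
def NoExitIn (c : List E) (M : Set V) : Prop :=
  ∀ e ∈ c, ∀ f, s f = s e → r f ∈ M → f = e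

end Graph

/-!
A cycle without exit in `M` leaves each of its vertices by the only edge that lands in `M`.
Since `M` is upward closed, every vertex of `M` reachable from such a cycle therefore lies on
it. Downward directedness yields a vertex `y ∈ M` reachable from both cycles, so `y` lies on
both; started at `y`, both cycles take the same edge at each step, hence one is a prefix of the
other, and since a cycle never revisits its base vertex they are equal.
-/

theorem List.exists_isRotated_cons_of_mem {α : Type*} {a : α} {l : List α} (ha : a ∈ l) :
    ∃ t, l ~r a :: t := by
  obtain ⟨u, v, rfl⟩ := List.append_of_mem ha
  exact ⟨v ++ u, List.isRotated_append⟩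

section Graph

variable {V E : Type*}

def IsExitlessCycle (s r : E → V) (c : List E) (M : Set V) : Prop :=
  IsCycle s r c ∧ CycleIn s r c M ∧ NoExitIn s r c M

variable {s r : E → V} {M : Set V} {c d : List E}

namespace IsCycle

theorem append_comm {a b : List E} (h : IsCycle s r (a ++ b)) : IsCycle s r (b ++ a) := by
  rcases eq_or_ne a [] with rfl | ha
  · simpa using h
  rcases eq_or_ne b [] with rfl | hb
  · simpa using h
  obtain ⟨-, hch, hclose, hnd⟩ := h
  obtain ⟨hcha, hchb, hab⟩ := List.isChain_append.mp hch
  have hba := hclose (by simp [ha])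
  rw [List.getLast_append_of_ne_nil _ hb, List.head_append_of_ne_nil ha] at hba
  refine ⟨by simp [hb], hchb.append hcha ?_, fun _ => ?_, ?_⟩
  · simp [List.getLast?_eq_some_getLast hb, List.head?_eq_some_head ha, hba]
  · rw [List.getLast_append_of_ne_nil _ ha, List.head_append_of_ne_nil hb]
    exact hab _ (List.getLast?_eq_some_getLast ha) _ (List.head?_eq_some_head hb)
  · simpa only [List.map_append, List.nodup_append_comm] using hnd

theorem isRotated (h : IsCycle s r c) (hcd : c ~r d) : IsCycle s r d := by
  obtain ⟨n, hn, rfl⟩ := List.isRotated_iff_mod.mp hcd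
  rw [← List.take_append_drop n c] at h
  rw [List.rotate_eq_drop_append_take hn]
  exact h.append_comm

theorem range_mem_sources (h : IsCycle s r c) {e : E} (he : e ∈ c) : r e ∈ c.map s := by
  obtain ⟨t, hrot⟩ := List.exists_isRotated_cons_of_mem he
  rw [(hrot.map s).mem_iff]
  obtain ⟨-, hch, hclose, -⟩ := h.isRotated hrot
  cases t with
  | nil => simpa using hclose
  | cons f t => simp [List.isChain_cons_cons.mp hch]

theorem eq_of_prefix (hc : IsCycle s r c) (hd : IsCycle s r d) (hcd : c <+: d) : c = d := by
  obtain ⟨u, rfl⟩ := hcd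
  cases u with
  | nil => simp
  | cons x u =>
    exfalso
    obtain ⟨hne, -, hclose, -⟩ := hc
    obtain ⟨-, hch, -, hnd⟩ := hd
    have hx : r (c.getLast hne) = s x := hch.rel_getLast_head_of_append hne (by simp)
    rw [List.map_append, List.nodup_append] at hnd
    exact hnd.2.2 _ (List.mem_map_of_mem (List.head_mem hne)) _ (by simp)
      ((hclose hne).symm.trans hx)

end IsCycle

theorem IsExitlessCycle.isRotated (h : IsExitlessCycle s r c M) (hcd : c ~r d) :
    IsExitlessCycle s r d M :=
  ⟨h.1.isRotated hcd, fun e he => h.2.1 e (hcd.mem_iff.mpr he),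
    fun e he => h.2.2 e (hcd.mem_iff.mpr he)⟩

theorem IsCycle.mem_sources_of_reach (hc : IsCycle s r c) (hex : NoExitIn s r c M)
    (hup : ∀ v w, Reach s r v w → w ∈ M → v ∈ M) {v y : V} (hv : v ∈ c.map s)
    (hvy : Reach s r v y) (hy : y ∈ M) : y ∈ c.map s := by
  induction hvy using Relation.ReflTransGen.head_induction_on with
  | refl => exact hv
  | head hstep hrest ih =>
    obtain ⟨f, rfl, rfl⟩ := hstep
    obtain ⟨e, he, hfe⟩ := List.mem_map.mp hv
    obtain rfl : f = e := hex e he f hfe.symm (hup _ _ hrest hy)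
    exact ih (hc.range_mem_sources he)

theorem prefix_or_prefix_of_head_source_eq {l₁ l₂ : List E}
    (h₁ : l₁.IsChain (fun a b => r a = s b)) (h₂ : l₂.IsChain (fun a b => r a = s b))
    (hdet : ∀ e ∈ l₁, ∀ f ∈ l₂, s e = s f → e = f)
    (hhead : ∀ e ∈ l₁.head?, ∀ f ∈ l₂.head?, s e = s f) : l₁ <+: l₂ ∨ l₂ <+: l₁ := by
  induction l₁ generalizing l₂ with
  | nil => exact Or.inl List.nil_prefix
  | cons a t₁ ih =>
    cases l₂ with
    | nil => exact Or.inr List.nil_prefix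
    | cons b t₂ =>
      obtain rfl : a = b := hdet a (by simp) b (by simp) (hhead a rfl b rfl)
      simp only [List.prefix_cons_inj]
      refine ih h₁.tail h₂.tail (fun e he f hf => hdet e (by simp [he]) f (by simp [hf])) ?_
      intro e he f hf
      exact (h₁.rel_head? he).symm.trans (h₂.rel_head? hf)

theorem IsExitlessCycle.eq_of_head_source_eq {e₁ e₂ : E} {t₁ t₂ : List E}
    (h₁ : IsExitlessCycle s r (e₁ :: t₁) M) (h₂ : IsExitlessCycle s r (e₂ :: t₂) M)
    (hs : s e₁ = s e₂) : e₁ :: t₁ = e₂ :: t₂ := by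
  have hdet : ∀ e ∈ e₁ :: t₁, ∀ f ∈ e₂ :: t₂, s e = s f → e = f :=
    fun e he f hf hef => (h₁.2.2 e he f hef.symm (h₂.2.1 f hf).2).symm
  rcases prefix_or_prefix_of_head_source_eq h₁.1.2.1 h₂.1.2.1 hdet (by simpa) with h | h
  · exact h₁.1.eq_of_prefix h₂.1 h
  · exact (h₂.1.eq_of_prefix h₁.1 h).symm

end Graph

/-- In a maximal tail `M` of a directed graph, any two cycles contained in `M` having
no exit in `M` are cyclic permutations (rotations) of each other. -/
theorem cycles_without_exit_in_maximalTail_unique {V E : Type*} (s r : E → V)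
    (M : Set V) (hM : MaximalTail s r M) (c₁ c₂ : List E)
    (hc₁ : IsCycle s r c₁) (hc₁M : CycleIn s r c₁ M) (hc₁ex : NoExitIn s r c₁ M)
    (hc₂ : IsCycle s r c₂) (hc₂M : CycleIn s r c₂ M) (hc₂ex : NoExitIn s r c₂ M) :
    c₁.IsRotated c₂ := by
  obtain ⟨-, hup, -, hdir⟩ := hM
  have hv₁ := List.mem_map_of_mem (f := s) (List.head_mem hc₁.1)
  have hv₂ := List.mem_map_of_mem (f := s) (List.head_mem hc₂.1)
  obtain ⟨y, hyM, hr₁, hr₂⟩ :=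
    hdir _ (hc₁M _ (List.head_mem hc₁.1)).1 _ (hc₂M _ (List.head_mem hc₂.1)).1
  obtain ⟨e₁, he₁, rfl⟩ := List.mem_map.mp (hc₁.mem_sources_of_reach hc₁ex hup hv₁ hr₁ hyM)
  obtain ⟨e₂, he₂, hs⟩ := List.mem_map.mp (hc₂.mem_sources_of_reach hc₂ex hup hv₂ hr₂ hyM)
  obtain ⟨t₁, hrot₁⟩ := List.exists_isRotated_cons_of_mem he₁
  obtain ⟨t₂, hrot₂⟩ := List.exists_isRotated_cons_of_mem he₂
  have heq : e₁ :: t₁ = e₂ :: t₂ :=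
    (IsExitlessCycle.isRotated ⟨hc₁, hc₁M, hc₁ex⟩ hrot₁).eq_of_head_source_eq
      (IsExitlessCycle.isRotated ⟨hc₂, hc₂M, hc₂ex⟩ hrot₂) hs.symm
  exact hrot₁.trans (heq ▸ hrot₂.symm)
end

section
/- Let E be the graph E_{n,S} with vertices v₁,…,vₙ, edges eᵢ from v_{i+1} to vᵢ for 1 ≤ i ≤ n−1, a loop fᵢ at each vᵢ, and an extra loop g_j at v_j for each j in a subset S of {1,…,n}. Then the hereditary saturated subsets of E⁰ are exactly the sets Hᵢ = {v₁,…,vᵢ} for 0 ≤ i ≤ n (with H₀ = ∅), and they form a chain of length n+1 under inclusion. -/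
section Graph

variable {V E : Type*} (s r : E → V)

/-- `H` is hereditary: `v ∈ H` and `v ≥ w` imply `w ∈ H`. -/
def Hereditary (H : Set V) : Prop :=
  ∀ v ∈ H, ∀ w, Reach s r v w → w ∈ H

/-- `H` is saturated: if `v` emits at least one edge and all edges out of `v` end in `H`,
then `v ∈ H`. -/
def Saturated (H : Set V) : Prop :=
  ∀ v, (∃ e, s e = v) → (∀ e, s e = v → r e ∈ H) → v ∈ H

end Graph

/-- Edges of the graph `E_{n,S}`: an edge `e i` from `v_{i+1}` to `v_i` (0-indexed) for
each `i : Fin (n-1)`, a loop `f i` at each vertex `i : Fin n`, and an extra loop `g j`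
at `j` for each `j ∈ S`. -/
abbrev GraphE.Edge (n : ℕ) (S : Set (Fin n)) : Type :=
  Fin (n - 1) ⊕ Fin n ⊕ {j : Fin n // j ∈ S}

/-- Source map of `E_{n,S}`. -/
def GraphE.src (n : ℕ) (S : Set (Fin n)) : GraphE.Edge n S → Fin n
  | .inl i => ⟨i.val + 1, by have := i.isLt; omega⟩
  | .inr (.inl i) => i
  | .inr (.inr j) => j.1

/-- Range map of `E_{n,S}`. -/
def GraphE.rng (n : ℕ) (S : Set (Fin n)) : GraphE.Edge n S → Fin n
  | .inl i => ⟨i.val, by have := i.isLt; omega⟩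
  | .inr (.inl i) => i
  | .inr (.inr j) => j.1

lemma GraphE.rng_le_src (n : ℕ) (S : Set (Fin n)) (e : GraphE.Edge n S) :
    ((GraphE.rng n S e : ℕ)) ≤ (GraphE.src n S e : ℕ) := by
  rcases e with i | i | j <;> simp [GraphE.src, GraphE.rng]

lemma GraphE.reach_le (n : ℕ) (S : Set (Fin n)) {v w : Fin n}
    (h : Reach (GraphE.src n S) (GraphE.rng n S) v w) : (w : ℕ) ≤ (v : ℕ) := by
  induction h with
  | refl => exact le_refl _
  | tail hab hbc ih =>
    obtain ⟨e, he1, he2⟩ := hbc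
    calc _ = _ := by rw [← he2]
    _ ≤ _ := (GraphE.rng_le_src n S e).trans (by rw [he1]; exact ih)

lemma GraphE.reach_of_le (n : ℕ) (S : Set (Fin n)) :
    ∀ k : ℕ, ∀ v w : Fin n, (v : ℕ) = (w : ℕ) + k →
      Reach (GraphE.src n S) (GraphE.rng n S) v w := by
  intro k
  induction k with
  | zero => intro v w h; have : v = w := Fin.ext (by omega); subst this; exact .refl
  | succ k ih =>
    intro v w h
    have hlt : (w : ℕ) + k < n - 1 := by have := v.isLt; omega
    refine Relation.ReflTransGen.head ⟨Sum.inl ⟨(w : ℕ) + k, hlt⟩, ?_, ?_⟩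
      (ih ⟨(w : ℕ) + k, by omega⟩ w rfl)
    · exact Fin.ext (by simp [GraphE.src]; omega)
    · rfl

/-- In the graph `E_{n,S}` (vertices `v₁,…,vₙ` written 0-indexed as `Fin n`, an edge from
`v_{i+1}` to `vᵢ` for `1 ≤ i ≤ n-1`, a loop at every vertex, and a second loop at `vⱼ`
exactly when `j ∈ S`), the hereditary saturated subsets of vertices are exactly the
initial segments `Hᵢ = {v₁,…,vᵢ}` for `0 ≤ i ≤ n`, and these form a chain of length
`n+1` under inclusion (they are totally ordered and pairwise distinct). -/
theorem hereditary_saturated_subsets_of_GraphE (n : ℕ) (hn : 0 < n) (S : Set (Fin n)) :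
    (∀ H : Set (Fin n),
      (Hereditary (GraphE.src n S) (GraphE.rng n S) H ∧
        Saturated (GraphE.src n S) (GraphE.rng n S) H) ↔
      ∃ i ≤ n, H = {v : Fin n | (v : ℕ) < i}) ∧
    (∀ i j : ℕ, i ≤ j → j ≤ n →
      {v : Fin n | (v : ℕ) < i} ⊆ {v : Fin n | (v : ℕ) < j}) ∧
    (∀ i j : ℕ, i ≤ n → j ≤ n →
      {v : Fin n | (v : ℕ) < i} = {v : Fin n | (v : ℕ) < j} → i = j) := by
  classical
  refine ⟨fun H => ⟨fun ⟨hHer, _⟩ => ?_, fun ⟨i, hi, hH⟩ => ⟨?_, ?_⟩⟩, ?_, ?_⟩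
  · -- hereditary implies initial segment
    by_cases hne : H.Nonempty
    · set T : Set ℕ := (fun v : Fin n => (v : ℕ)) '' H with hT
      have hTne : T.Nonempty := hne.image _
      have hTbdd : BddAbove T := by
        refine ⟨n, fun k hk => ?_⟩
        obtain ⟨v, _, rfl⟩ := hk
        exact le_of_lt v.isLt
      obtain ⟨u, huH, hus⟩ : ∃ u : Fin n, u ∈ H ∧ (u : ℕ) = sSup T :=
        Nat.sSup_mem hTne hTbdd
      refine ⟨sSup T + 1, by have := u.isLt; omega, ?_⟩
      ext v
      simp only [Set.mem_setOf_eq]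
      constructor
      · intro hv
        have : (v : ℕ) ∈ T := ⟨v, hv, rfl⟩
        have := le_csSup hTbdd this
        omega
      · intro hv
        exact hHer u huH v (GraphE.reach_of_le n S ((u : ℕ) - (v : ℕ)) u v (by omega))
    · refine ⟨0, Nat.zero_le _, ?_⟩
      rw [Set.not_nonempty_iff_eq_empty] at hne
      rw [hne]; ext v; simp
  · -- initial segment is hereditary
    intro v hv w hreach
    have := GraphE.reach_le n S hreach
    rw [hH] at hv ⊢
    simp only [Set.mem_setOf_eq] at hv ⊢
    omega
  · -- initial segment is saturated (every vertex has a loop)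
    intro v _ hall
    exact hall (Sum.inr (Sum.inl v)) rfl
  · -- chain
    intro i j hij _ v hv
    simp only [Set.mem_setOf_eq] at hv ⊢
    omega
  · -- injectivity
    have key : ∀ i j : ℕ, i < j → j ≤ n →
        {v : Fin n | (v : ℕ) < i} ≠ {v : Fin n | (v : ℕ) < j} := by
      intro i j hij hjn heq
      have hv : (⟨i, by omega⟩ : Fin n) ∈ {v : Fin n | (v : ℕ) < j} := by
        simp only [Set.mem_setOf_eq]; exact hij
      rw [← heq] at hv
      simp at hv
    intro i j hi hj heq
    rcases lt_trichotomy i j with h | h | h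
    · exact absurd heq (key i j h hj)
    · exact h
    · exact absurd heq.symm (key j i h hi)
end

section
/- Let A be a prime ring and e ∈ A a nonzero idempotent such that the corner ring eAe is a field. Then A is (right) primitive. -/
/-!
The right module is `eA`. If `x ∈ eA` is nonzero, primeness gives `u` with `x u e ≠ 0`; this is a
nonzero element of the corner `eAe`, so some `e y e` satisfies `x u e · e y e = e`. Hence `e ∈ xA`
and `eA` is simple. It is faithful because `a A r = 0` with `a ≠ 0` forces `r = 0` in a prime ring.
-/

universe u

open MulOpposite

/-- Primeness is applied to the ideal `{y | a A y = 0}` and its left annihilator, which contain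
`b` and `a` respectively. -/
theorem eq_zero_or_eq_zero_of_forall_mul_mul_eq_zero {A : Type*} [Ring A]
    (hprime : ∀ I J : TwoSidedIdeal A, (∀ x ∈ I, ∀ y ∈ J, x * y = 0) → I = ⊥ ∨ J = ⊥)
    {a b : A} (hab : ∀ x : A, a * x * b = 0) : a = 0 ∨ b = 0 := by
  let J : TwoSidedIdeal A := .mk' {y | ∀ u, a * u * y = 0}
    (fun _ => mul_zero _)
    (fun hx hy u => by rw [mul_add, hx u, hy u, add_zero])
    (fun hx u => by rw [mul_neg, hx u, neg_zero])
    (fun {x y} hy u => by rw [← mul_assoc, mul_assoc a, hy])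
    (fun {x y} hx u => by rw [← mul_assoc, hx, zero_mul])
  let I : TwoSidedIdeal A := .mk' {x | ∀ y ∈ J, x * y = 0}
    (fun _ _ => zero_mul _)
    (fun hx hx' y hy => by rw [add_mul, hx y hy, hx' y hy, add_zero])
    (fun hx y hy => by rw [neg_mul, hx y hy, neg_zero])
    (fun hx y hy => by rw [mul_assoc, hx y hy, mul_zero])
    (fun {x r} hx y hy => by rw [mul_assoc, hx (r * y) (J.mul_mem_left r y hy)])
  have haI : a ∈ I := (TwoSidedIdeal.mem_mk' ..).mpr fun y hy => by
    simpa using (TwoSidedIdeal.mem_mk' ..).mp hy 1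
  have hbJ : b ∈ J := (TwoSidedIdeal.mem_mk' ..).mpr hab
  rcases hprime I J (fun x hx => (TwoSidedIdeal.mem_mk' ..).mp hx) with h | h
  · exact .inl ((TwoSidedIdeal.mem_bot A).mp (h ▸ haI))
  · exact .inr ((TwoSidedIdeal.mem_bot A).mp (h ▸ hbJ))

theorem faithfulSMul_of_ne_bot {A : Type*} [Ring A]
    (hprime : ∀ I J : TwoSidedIdeal A, (∀ x ∈ I, ∀ y ∈ J, x * y = 0) → I = ⊥ ∨ J = ⊥)
    {N : Submodule Aᵐᵒᵖ A} (hN : N ≠ ⊥) : FaithfulSMul Aᵐᵒᵖ N := by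
  obtain ⟨a, haN, ha⟩ := N.ne_bot_iff.mp hN
  refine ⟨fun {r s} hrs => unop_injective (sub_eq_zero.mp ?_)⟩
  refine (eq_zero_or_eq_zero_of_forall_mul_mul_eq_zero hprime fun x => ?_).resolve_left ha
  have hax : a * x ∈ N := by simpa using N.smul_mem (op x) haN
  have := congrArg Subtype.val (hrs ⟨a * x, hax⟩)
  simp only [Submodule.coe_smul, smul_eq_mul_unop] at this
  rw [mul_sub, this, sub_self]

theorem isSimpleModule_span_idempotent {A : Type*} [Ring A]
    (hprime : ∀ I J : TwoSidedIdeal A, (∀ x ∈ I, ∀ y ∈ J, x * y = 0) → I = ⊥ ∨ J = ⊥)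
    {e : A} (he : e * e = e) (hene : e ≠ 0)
    (hinv : ∀ x : A, e * x * e ≠ 0 → ∃ y : A, (e * x * e) * (e * y * e) = e) :
    IsSimpleModule Aᵐᵒᵖ (Aᵐᵒᵖ ∙ e) := by
  have hmem {x : A} : x ∈ Aᵐᵒᵖ ∙ e ↔ e * x = x := by
    refine ⟨fun hx => ?_, fun hx => Submodule.mem_span_singleton.mpr ⟨op x, by simp [hx]⟩⟩
    obtain ⟨r, rfl⟩ := Submodule.mem_span_singleton.mp hx
    simp [← mul_assoc, he]
  have : Nontrivial (Aᵐᵒᵖ ∙ e) :=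
    ⟨⟨⟨e, Submodule.mem_span_singleton_self e⟩, 0, fun h => hene (congrArg Subtype.val h)⟩⟩
  refine isSimpleModule_iff_toSpanSingleton_surjective.mpr ⟨inferInstance, ?_⟩
  rintro ⟨x, hx⟩ hx0 ⟨w, hw⟩
  have hx0 : x ≠ 0 := fun h => hx0 (Subtype.ext h)
  obtain ⟨u, hu⟩ : ∃ u, x * u * e ≠ 0 := by
    by_contra! h
    exact (eq_zero_or_eq_zero_of_forall_mul_mul_eq_zero hprime h).elim hx0 hene
  obtain ⟨y, hy⟩ := hinv (x * u) (by rwa [← mul_assoc, hmem.mp hx])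
  have hxe : x * (u * e * y * e) = e := by
    refine Eq.trans ?_ hy
    rw [← mul_assoc e x, hmem.mp hx]
    simp only [mul_assoc]
    rw [← mul_assoc e e, he]
  refine ⟨op (u * e * y * e * w), Subtype.ext ?_⟩
  simp only [LinearMap.toSpanSingleton_apply, Submodule.coe_smul, smul_eq_mul_unop, unop_op]
  rw [← mul_assoc, hxe, hmem.mp hw]

theorem primitive_of_prime_with_field_corner_general (A : Type u) [Ring A]
    (hprime : ∀ I J : TwoSidedIdeal A, (∀ x ∈ I, ∀ y ∈ J, x * y = 0) → I = ⊥ ∨ J = ⊥)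
    (e : A) (he : e * e = e) (hene : e ≠ 0)
    (hinv : ∀ x : A, e * x * e ≠ 0 → ∃ y : A, (e * x * e) * (e * y * e) = e) :
    ∃ (V : Type u) (_ : AddCommGroup V) (_ : Module Aᵐᵒᵖ V),
      IsSimpleModule Aᵐᵒᵖ V ∧ FaithfulSMul Aᵐᵒᵖ V :=
  ⟨Aᵐᵒᵖ ∙ e, inferInstance, inferInstance, isSimpleModule_span_idempotent hprime he hene hinv,
    faithfulSMul_of_ne_bot hprime (Submodule.span_singleton_eq_bot.not.mpr hene)⟩

/-- Let `A` be a prime ring and `e ∈ A` a nonzero idempotent such that the corner ring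
`eAe` is a field (multiplication of corner elements is commutative and every nonzero
corner element has an inverse in the corner, with identity `e`).  Then `A` is right
primitive: it has a faithful simple right module (a module over `Aᵐᵒᵖ`). -/
theorem primitive_of_prime_with_field_corner (A : Type u) [Ring A]
    (hprime : ∀ I J : TwoSidedIdeal A, (∀ x ∈ I, ∀ y ∈ J, x * y = 0) → I = ⊥ ∨ J = ⊥)
    (e : A) (he : e * e = e) (hene : e ≠ 0)
    (hcomm : ∀ x y : A, (e * x * e) * (e * y * e) = (e * y * e) * (e * x * e))
    (hinv : ∀ x : A, e * x * e ≠ 0 → ∃ y : A, (e * x * e) * (e * y * e) = e) :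
    ∃ (V : Type u) (_ : AddCommGroup V) (_ : Module Aᵐᵒᵖ V),
      IsSimpleModule Aᵐᵒᵖ V ∧ FaithfulSMul Aᵐᵒᵖ V :=
  primitive_of_prime_with_field_corner_general A hprime e he hene hinv
end

section
/- Let A be a K-algebra that is a domain (or more generally prime) and suppose A contains an element c and an idempotent v with vc = cv = c such that the corner vAv is isomorphic to K[x,x⁻¹] with c ↦ x. If K is infinite, then for any a₁,…,a_m, b₁,…,b_m ∈ A with Σ aᵢ v bᵢ = 0, the element y = Σ aᵢ c bᵢ satisfies y ∈ ⋂_{λ∈K} A(c−λv)A, and v·(⋂_{λ} A(c−λv)A)·v ⊆ ⋂_{λ} vAv(c−λv)vAv = 0; hence y = 0 whenever vyv = y. -/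
open LaurentPolynomial Polynomial in
lemma laurent_eq_zero_of_forall_dvd {K : Type*} [Field K] [Infinite K]
    (s : LaurentPolynomial K)
    (h : ∀ lam : K, ∃ t, s = (LaurentPolynomial.T 1 - lam • 1) * t) : s = 0 := by
  obtain ⟨n, P, hP⟩ := s.exists_T_pow
  have hPz : P = 0 := by
    apply Polynomial.eq_zero_of_infinite_isRoot
    apply Set.Infinite.mono (s := {x : K | x ≠ 0})
    · intro lam (hlam : lam ≠ 0)
      obtain ⟨t, ht⟩ := h lam
      obtain ⟨k, Q, hQ⟩ := t.exists_T_pow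
      have hC : (lam • 1 : LaurentPolynomial K) = LaurentPolynomial.C lam := by
        rw [← Algebra.algebraMap_eq_smul_one]; rfl
      have key : Polynomial.toLaurent (P * X ^ k)
          = Polynomial.toLaurent ((X - Polynomial.C lam) * Q * X ^ n) := by
        rw [map_mul, map_mul, map_mul, hP, map_sub, Polynomial.toLaurent_X,
          Polynomial.toLaurent_X_pow, Polynomial.toLaurent_X_pow, Polynomial.toLaurent_C, hQ,
          ht, hC]
        ring
      have key2 : P * X ^ k = (X - Polynomial.C lam) * Q * X ^ n :=
        Polynomial.toLaurent_injective key
      have := congrArg (Polynomial.eval lam) key2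
      simp only [Polynomial.eval_mul, Polynomial.eval_pow, Polynomial.eval_X,
        Polynomial.eval_sub, Polynomial.eval_C, sub_self, zero_mul] at this
      have hpow : lam ^ k ≠ 0 := pow_ne_zero _ hlam
      simpa [Polynomial.IsRoot] using (mul_eq_zero.mp this).resolve_right hpow
    · have : ({0}ᶜ : Set K).Infinite := (Set.finite_singleton 0).infinite_compl
      simpa [Set.compl_def] using this
  have : s * (LaurentPolynomial.T (n : ℤ) * LaurentPolynomial.T (-n)) = s := by
    rw [← T_add]; simp
  rw [← this, ← mul_assoc, ← hP, hPz]
  simp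

/-- Let `K` be an infinite field, `A` a prime `K`-algebra, `v` a nonzero idempotent and
`c ∈ A` with `vc = cv = c`, such that the corner ring `vAv` is isomorphic to `K[x,x⁻¹]`
via an isomorphism carrying `v` to `1` and `c` to `x` (encoded by its inverse `ψ`).
If `Σ aᵢ v bᵢ = 0`, then the element `y = Σ aᵢ c bᵢ = Σ aᵢ(c − λv)bᵢ` lies in the
two-sided ideal `A(c − λv)A` for every `λ ∈ K`; moreover
`v·(⋂_λ A(c−λv)A)·v ⊆ ⋂_λ vAv(c−λv)vAv = 0`, hence `y = 0` whenever `vyv = y`. -/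
theorem corner_laurent_intersection_argument (K A : Type*) [Field K] [Infinite K]
    [Ring A] [Algebra K A]
    (hprime : ∀ I J : TwoSidedIdeal A, (∀ x ∈ I, ∀ y ∈ J, x * y = 0) → I = ⊥ ∨ J = ⊥)
    (v c : A) (hv : v * v = v) (hvne : v ≠ 0) (hvc : v * c = c) (hcv : c * v = c)
    (ψ : LaurentPolynomial K → A)
    (hψadd : ∀ p q, ψ (p + q) = ψ p + ψ q)
    (hψmul : ∀ p q, ψ (p * q) = ψ p * ψ q)
    (hψsmul : ∀ (k : K) p, ψ (k • p) = k • ψ p)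
    (hψone : ψ 1 = v) (hψX : ψ (LaurentPolynomial.T 1) = c)
    (hψinj : Function.Injective ψ)
    (hψrange : Set.range ψ = {x : A | v * x * v = x})
    (m : ℕ) (a b : Fin m → A) (h0 : ∑ i, a i * v * b i = 0) :
    (∀ lam : K, (∑ i, a i * c * b i) ∈ TwoSidedIdeal.span {c - lam • v}) ∧
    (∀ z : A, (∀ lam : K, z ∈ TwoSidedIdeal.span {c - lam • v}) → v * z * v = 0) ∧
    (v * (∑ i, a i * c * b i) * v = ∑ i, a i * c * b i → ∑ i, a i * c * b i = 0) := by
  have hψzero : ψ 0 = 0 := by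
    have := hψadd 0 0
    rw [add_zero] at this
    exact (left_eq_add.mp this)
  have hψneg : ∀ p, ψ (-p) = -ψ p := by
    intro p
    have h := hψadd p (-p)
    rw [add_neg_cancel, hψzero] at h
    exact (neg_eq_of_add_eq_zero_right h.symm).symm
  have hψsub : ∀ p q, ψ (p - q) = ψ p - ψ q := by
    intro p q
    rw [sub_eq_add_neg, hψadd, hψneg, sub_eq_add_neg]
  have hψg : ∀ lam : K, ψ (LaurentPolynomial.T 1 - lam • 1) = c - lam • v := by
    intro lam
    rw [hψsub, hψX, hψsmul, hψone]
  have hcorner : ∀ x : A, ∃ p, ψ p = v * x * v := by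
    intro x
    have h1 : v * (v * x * v) * v = v * x * v := by
      calc v * (v * x * v) * v = (v * v) * x * (v * v) := by simp only [mul_assoc]
        _ = v * x * v := by rw [hv]
    have hx : (v * x * v) ∈ Set.range ψ := by rw [hψrange]; exact h1
    exact hx
  -- part 1
  have part1 : ∀ lam : K, (∑ i, a i * c * b i) ∈ TwoSidedIdeal.span {c - lam • v} := by
    intro lam
    have heq : (∑ i, a i * c * b i) = ∑ i, a i * (c - lam • v) * b i := by
      have h1 : ∑ i, a i * (c - lam • v) * b i
          = (∑ i, a i * c * b i) - lam • (∑ i, a i * v * b i) := by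
        rw [Finset.smul_sum, ← Finset.sum_sub_distrib]
        refine Finset.sum_congr rfl fun i _ => ?_
        rw [mul_sub, sub_mul, mul_smul_comm, smul_mul_assoc]
      rw [h1, h0, smul_zero, sub_zero]
    rw [heq]
    refine sum_mem ?_
    intro i _
    refine TwoSidedIdeal.mul_mem_right _ _ _ (TwoSidedIdeal.mul_mem_left _ _ _ ?_)
    exact TwoSidedIdeal.subset_span rfl
  -- part 2
  have part2 : ∀ z : A, (∀ lam : K, z ∈ TwoSidedIdeal.span {c - lam • v}) → v * z * v = 0 := by
    intro z hz
    have key : ∀ lam : K, ∃ t, v * z * v = ψ ((LaurentPolynomial.T 1 - lam • 1) * t) := by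
      intro lam
      have hz' := hz lam
      clear hz
      rw [TwoSidedIdeal.mem_span_iff_mem_addSubgroup_closure] at hz'
      have hgv : v * (c - lam • v) = c - lam • v := by
        rw [mul_sub, hvc, mul_smul_comm, hv]
      have hvg : (c - lam • v) * v = c - lam • v := by
        rw [sub_mul, hcv, smul_mul_assoc, hv]
      induction hz' using AddSubgroup.closure_induction with
      | mem w hw =>
        obtain ⟨-, ⟨r, -, g', hg', rfl⟩, r', -, rfl⟩ := hw
        rw [Set.mem_singleton_iff] at hg'
        subst hg'
        obtain ⟨p, hp⟩ := hcorner r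
        obtain ⟨q, hq⟩ := hcorner r'
        refine ⟨p * q, ?_⟩
        have hgvv : v * (c - lam • v) * v = c - lam • v := by rw [hgv, hvg]
        have e1 : v * (r * (c - lam • v) * r') * v
            = (v * r * v) * (c - lam • v) * (v * r' * v) := by
          conv_lhs => rw [← hgvv]
          simp only [mul_assoc]
        rw [e1, ← hp, ← hq, ← hψg lam, ← hψmul, ← hψmul]
        congr 1
        ring
      | zero => exact ⟨0, by simp [hψzero]⟩
      | add x y _ _ hx hy =>
        obtain ⟨t1, ht1⟩ := hx
        obtain ⟨t2, ht2⟩ := hy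
        refine ⟨t1 + t2, ?_⟩
        rw [mul_add, add_mul, ht1, ht2, ← hψadd, ← mul_add]
      | neg x _ hx =>
        obtain ⟨t1, ht1⟩ := hx
        refine ⟨-t1, ?_⟩
        rw [mul_neg, neg_mul, ht1, ← hψneg, ← mul_neg]
    obtain ⟨t0, ht0⟩ := key 0
    have hsz : (LaurentPolynomial.T 1 - (0 : K) • 1) * t0 = 0 := by
      apply laurent_eq_zero_of_forall_dvd
      intro lam
      obtain ⟨t, ht⟩ := key lam
      exact ⟨t, hψinj (by rw [← ht0, ht])⟩
    rw [ht0, hsz]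
    exact hψzero
  refine ⟨part1, part2, ?_⟩
  intro hfix
  have h2 := part2 _ part1
  rw [hfix] at h2
  exact h2
end
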